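/- For every d ∈ {1,...,9}, α_d < β_d, where α_d = (9 + 10·ln 10 + 9(d+1)·ln(1 − 1/(d+1)))/(81d) and β_d = 10·(9 + ln 10 + 9d·ln(1 − 1/(d+1)))/(81(d+1)). -/
import Mathlib

lemma exp_lb_aux (x : ℝ) (hx : 0 ≤ x) : (1 + x / 8) ^ 8 ≤ Real.exp x := by
  have h : Real.exp x = (Real.exp (x / 8)) ^ 8 := by
    rw [← Real.exp_nat_mul]; congr 1; push_cast; ring
  rw [h]
  exact pow_le_pow_left₀ (by positivity) (by linarith [Real.add_one_le_exp (x / 8)]) 8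

lemma log_lt_aux (a c : ℝ) (ha : 0 < a) (hc : 0 ≤ c) (h : a < (1 + c / 8) ^ 8) :
    Real.log a < c := by
  rw [Real.log_lt_iff_lt_exp ha]
  exact h.trans_le (exp_lb_aux c hc)

lemma log_lb_aux (a c : ℝ) (ha : 0 < a) (hc : 0 ≤ c) (h : a⁻¹ < (1 + c / 8) ^ 8) :
    -c < Real.log a := by
  have := log_lt_aux a⁻¹ c (by positivity) hc h
  rw [Real.log_inv] at this
  linarith

theorem alpha_lt_beta (d : ℕ) (hd : d ∈ Finset.Icc 1 9) :
    (9 + 10 * Real.log 10 + 9 * ((d : ℝ) + 1) * Real.log (1 - 1 / ((d : ℝ) + 1))) / (81 * d) <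
      10 * (9 + Real.log 10 + 9 * (d : ℝ) * Real.log (1 - 1 / ((d : ℝ) + 1))) /
        (81 * ((d : ℝ) + 1)) := by
  have h10 : Real.log 10 < 2.7 := log_lt_aux 10 2.7 (by norm_num) (by norm_num) (by norm_num)
  simp only [Finset.mem_Icc] at hd
  obtain ⟨h1, h9⟩ := hd
  interval_cases d
  · have hL := log_lb_aux ((1:ℝ) - 1 / ((1:ℕ) + 1)) 0.75 (by norm_num) (by norm_num) (by norm_num)
    rw [div_lt_div_iff₀ (by norm_num) (by norm_num)]; push_cast at hL ⊢; nlinarith [hL, h10]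
  · have hL := log_lb_aux ((1:ℝ) - 1 / ((2:ℕ) + 1)) 0.43 (by norm_num) (by norm_num) (by norm_num)
    rw [div_lt_div_iff₀ (by norm_num) (by norm_num)]; push_cast at hL ⊢; nlinarith [hL, h10]
  · have hL := log_lb_aux ((1:ℝ) - 1 / ((3:ℕ) + 1)) 0.305 (by norm_num) (by norm_num) (by norm_num)
    rw [div_lt_div_iff₀ (by norm_num) (by norm_num)]; push_cast at hL ⊢; nlinarith [hL, h10]
  · have hL := log_lb_aux ((1:ℝ) - 1 / ((4:ℕ) + 1)) 0.231 (by norm_num) (by norm_num) (by norm_num)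
    rw [div_lt_div_iff₀ (by norm_num) (by norm_num)]; push_cast at hL ⊢; nlinarith [hL, h10]
  · have hL := log_lb_aux ((1:ℝ) - 1 / ((5:ℕ) + 1)) 0.188 (by norm_num) (by norm_num) (by norm_num)
    rw [div_lt_div_iff₀ (by norm_num) (by norm_num)]; push_cast at hL ⊢; nlinarith [hL, h10]
  · have hL := log_lb_aux ((1:ℝ) - 1 / ((6:ℕ) + 1)) 0.159 (by norm_num) (by norm_num) (by norm_num)
    rw [div_lt_div_iff₀ (by norm_num) (by norm_num)]; push_cast at hL ⊢; nlinarith [hL, h10]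
  · have hL := log_lb_aux ((1:ℝ) - 1 / ((7:ℕ) + 1)) 0.138 (by norm_num) (by norm_num) (by norm_num)
    rw [div_lt_div_iff₀ (by norm_num) (by norm_num)]; push_cast at hL ⊢; nlinarith [hL, h10]
  · have hL := log_lb_aux ((1:ℝ) - 1 / ((8:ℕ) + 1)) 0.1205 (by norm_num) (by norm_num) (by norm_num)
    rw [div_lt_div_iff₀ (by norm_num) (by norm_num)]; push_cast at hL ⊢; nlinarith [hL, h10]
  · have hL := log_lb_aux ((1:ℝ) - 1 / ((9:ℕ) + 1)) 0.1075 (by norm_num) (by norm_num) (by norm_num)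
    rw [div_lt_div_iff₀ (by norm_num) (by norm_num)]; push_cast at hL ⊢; nlinarith [hL, h10]
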